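/- arXiv:2012.13460 — 4 statements merged into one kernel-verified Lean document; each statement's English description precedes it below -/
import Mathlib

section
/- For all a > 0 and θ ∈ [0,π), one has 0 ≤ 2/(1+cos θ) − 2/((1−a²)cos θ + 1 + a²) = a² · 2(1−cos θ)/((1+cos θ)((1−a²)cos θ + 1 + a²)) ≤ a² · (2/(1+cos θ)) · tan²(θ/2). -/
open Real Set

/-- For `a > 0` and `θ ∈ [0, π)`:
`0 ≤ 2/(1+cos θ) − 2/((1−a²)cos θ + 1 + a²)
   = a² · 2(1−cos θ)/((1+cos θ)((1−a²)cos θ + 1 + a²)) ≤ a² · (2/(1+cos θ)) · tan²(θ/2)`. -/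
theorem stmt3 (a θ : ℝ) (ha : 0 < a) (hθ : θ ∈ Set.Ico 0 Real.pi) :
    0 ≤ 2 / (1 + Real.cos θ) - 2 / ((1 - a ^ 2) * Real.cos θ + 1 + a ^ 2) ∧
    2 / (1 + Real.cos θ) - 2 / ((1 - a ^ 2) * Real.cos θ + 1 + a ^ 2)
      = a ^ 2 * (2 * (1 - Real.cos θ))
        / ((1 + Real.cos θ) * ((1 - a ^ 2) * Real.cos θ + 1 + a ^ 2)) ∧
    2 / (1 + Real.cos θ) - 2 / ((1 - a ^ 2) * Real.cos θ + 1 + a ^ 2)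
      ≤ a ^ 2 * (2 / (1 + Real.cos θ)) * Real.tan (θ / 2) ^ 2 := by
  obtain ⟨h0, hπ⟩ := hθ
  set c := Real.cos θ with hc
  have hc1 : -1 < c := by
    have := Real.cos_lt_cos_of_nonneg_of_le_pi h0 le_rfl hπ
    rw [Real.cos_pi] at this
    exact this
  have hcle : c ≤ 1 := Real.cos_le_one θ
  have h1c : 0 < 1 + c := by linarith
  have hD : 0 < (1 - a ^ 2) * c + 1 + a ^ 2 := by nlinarith [sq_nonneg a]
  have hDge : 1 + c ≤ (1 - a ^ 2) * c + 1 + a ^ 2 := by nlinarith [sq_nonneg a]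
  have heq : 2 / (1 + c) - 2 / ((1 - a ^ 2) * c + 1 + a ^ 2)
      = a ^ 2 * (2 * (1 - c)) / ((1 + c) * ((1 - a ^ 2) * c + 1 + a ^ 2)) := by
    rw [div_sub_div _ _ h1c.ne' hD.ne']
    congr 1; ring
  have htan : Real.tan (θ / 2) ^ 2 = (1 - c) / (1 + c) := by
    have hcos : Real.cos (θ / 2) ^ 2 = (1 + c) / 2 := by
      rw [Real.cos_sq]; rw [hc]; ring_nf
    have hsin : Real.sin (θ / 2) ^ 2 = (1 - c) / 2 := by
      have := Real.sin_sq_add_cos_sq (θ / 2)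
      linarith
    rw [Real.tan_eq_sin_div_cos, div_pow, hcos, hsin]
    field_simp
  refine ⟨?_, heq, ?_⟩
  · rw [heq]
    apply div_nonneg (by nlinarith) (by positivity)
  · rw [heq, htan]
    rw [div_le_iff₀ (by positivity)]
    have h1 : a ^ 2 * (2 / (1 + c)) * ((1 - c) / (1 + c))
        = a ^ 2 * (2 * (1 - c)) / ((1 + c) * (1 + c)) := by
      field_simp
    rw [h1, div_mul_eq_mul_div, le_div_iff₀ (by positivity)]
    have hX : 0 ≤ a ^ 2 * (2 * (1 - c)) := by nlinarith
    nlinarith [mul_le_mul_of_nonneg_left (mul_le_mul_of_nonneg_left hDge h1c.le) hX]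
end

section
/- Let θ, θ' ∈ [0,π) and φ, φ' ∈ [0,2π), and for a > 0 let θ_a := 2 arctan(a tan(θ/2)). Define ω_a·ω'_a := sin θ_a sin θ'_a cos(φ−φ') + cos θ_a cos θ'_a. Then 1 − ω_a·ω'_a = 2a² (tan²(θ/2) + tan²(θ'/2) − 2 tan(θ/2) tan(θ'/2) cos(φ−φ')) / ((1+tan²(θ_a/2))(1+tan²(θ'_a/2))). -/
open Real Set

lemma sin2at (x : ℝ) : Real.sin (2 * Real.arctan x) = 2 * x / (1 + x ^ 2) := by
  rw [sin_two_mul, sin_arctan, cos_arctan]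
  have h : Real.sqrt (1 + x ^ 2) ^ 2 = 1 + x ^ 2 := Real.sq_sqrt (by positivity)
  have h0 : Real.sqrt (1 + x ^ 2) ≠ 0 := by positivity
  field_simp
  rw [h]

lemma cos2at (x : ℝ) : Real.cos (2 * Real.arctan x) = (1 - x ^ 2) / (1 + x ^ 2) := by
  rw [cos_two_mul, cos_arctan]
  have h : Real.sqrt (1 + x ^ 2) ^ 2 = 1 + x ^ 2 := Real.sq_sqrt (by positivity)
  have h0 : Real.sqrt (1 + x ^ 2) ≠ 0 := by positivity
  field_simp
  nlinarith [h]

/-- For `θ, θ' ∈ [0,π)`, `φ, φ' ∈ [0,2π)` and `a > 0`, with `θ_a = 2 arctan(a tan(θ/2))`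
and `ω_a·ω'_a = sin θ_a sin θ'_a cos(φ−φ') + cos θ_a cos θ'_a`, one has
`1 − ω_a·ω'_a = 2a²(tan²(θ/2) + tan²(θ'/2) − 2 tan(θ/2)tan(θ'/2)cos(φ−φ'))
  / ((1+tan²(θ_a/2))(1+tan²(θ'_a/2)))`. -/
theorem stmt4 (a θ θ' φ φ' : ℝ) (ha : 0 < a)
    (hθ : θ ∈ Set.Ico 0 Real.pi) (hθ' : θ' ∈ Set.Ico 0 Real.pi)
    (hφ : φ ∈ Set.Ico 0 (2 * Real.pi)) (hφ' : φ' ∈ Set.Ico 0 (2 * Real.pi)) :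
    1 - (Real.sin (2 * Real.arctan (a * Real.tan (θ / 2)))
          * Real.sin (2 * Real.arctan (a * Real.tan (θ' / 2))) * Real.cos (φ - φ')
        + Real.cos (2 * Real.arctan (a * Real.tan (θ / 2)))
          * Real.cos (2 * Real.arctan (a * Real.tan (θ' / 2))))
    = 2 * a ^ 2 * (Real.tan (θ / 2) ^ 2 + Real.tan (θ' / 2) ^ 2
          - 2 * Real.tan (θ / 2) * Real.tan (θ' / 2) * Real.cos (φ - φ'))
      / ((1 + Real.tan ((2 * Real.arctan (a * Real.tan (θ / 2))) / 2) ^ 2)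
          * (1 + Real.tan ((2 * Real.arctan (a * Real.tan (θ' / 2))) / 2) ^ 2)) := by
  set t := Real.tan (θ / 2)
  set s := Real.tan (θ' / 2)
  have ht : Real.tan (2 * Real.arctan (a * t) / 2) = a * t := by
    rw [mul_div_cancel_left₀ _ (two_ne_zero), Real.tan_arctan]
  have hs : Real.tan (2 * Real.arctan (a * s) / 2) = a * s := by
    rw [mul_div_cancel_left₀ _ (two_ne_zero), Real.tan_arctan]
  rw [ht, hs, sin2at, sin2at, cos2at, cos2at]
  have h1 : (1 : ℝ) + (a * t) ^ 2 ≠ 0 := by positivity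
  have h2 : (1 : ℝ) + (a * s) ^ 2 ≠ 0 := by positivity
  field_simp
  ring
end

section
/- Let P_ℓ be the Legendre polynomial of degree ℓ ≥ 1 and Q_ℓ(x) := (1 − P_ℓ(x))/(1 − x) for x ∈ [−1,1) (extended by Q_ℓ(1) = P_ℓ'(1)). Then ∫_{−1}^{1} |Q_ℓ(x)| dx ≤ (9ℓ − 3)/2. In particular ‖Q_ℓ‖_{L¹([−1,1])} = O(ℓ). -/
open Real Set

open Polynomial

private lemma iterDeriv_eval (p : Polynomial ℝ) (n : ℕ) :
    iteratedDeriv n (fun x => p.eval x) = fun x => (derivative^[n] p).eval x := by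
  induction n with
  | zero => rw [iteratedDeriv_zero, Function.iterate_zero_apply]
  | succ n ih =>
    rw [iteratedDeriv_succ, ih, Function.iterate_succ_apply']
    funext x
    exact Polynomial.deriv (p := derivative^[n] p)

private lemma leib_X (p : Polynomial ℝ) (n : ℕ) :
    derivative^[n+1] (X * p) =
      X * derivative^[n+1] p + ((n : ℝ[X]) + 1) * derivative^[n] p := by
  induction n with
  | zero => simp [derivative_mul]; ring
  | succ n ih =>
    have h := congrArg derivative ih
    rw [← Function.iterate_succ_apply' derivative (n+1) (X*p)] at h
    simp only [derivative_add, derivative_mul, derivative_X, derivative_natCast, derivative_ofNat,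
      derivative_one] at h
    simp only [← Function.iterate_succ_apply' derivative] at h
    rw [h]; push_cast; ring

private lemma leib_sq (p : Polynomial ℝ) (n : ℕ) :
    derivative^[n+2] ((X^2 - 1) * p) =
      (X^2 - 1) * derivative^[n+2] p + (2*((n : ℝ[X]) + 2)) * X * derivative^[n+1] p
        + (((n : ℝ[X]) + 2) * ((n : ℝ[X]) + 1)) * derivative^[n] p := by
  induction n with
  | zero =>
    show derivative (derivative ((X^2 - 1) * p)) = _
    simp only [derivative_mul, derivative_sub, derivative_one, derivative_pow,
      derivative_X, derivative_add, derivative_ofNat, map_ofNat, Nat.cast_ofNat, derivative_zero, C_1]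
    simp only [← Function.iterate_succ_apply' derivative, Function.iterate_one,
      Function.iterate_succ_apply, Function.iterate_zero_apply]
    push_cast
    simp only [C_1, map_one]
    ring
  | succ n ih =>
    have h := congrArg derivative ih
    rw [← Function.iterate_succ_apply' derivative (n+2) ((X^2-1)*p)] at h
    simp only [derivative_add, derivative_mul, derivative_sub, derivative_one,
      derivative_pow, derivative_X, derivative_natCast, derivative_ofNat, map_ofNat, Nat.cast_ofNat] at h
    simp only [← Function.iterate_succ_apply' derivative] at h
    rw [h]; push_cast; ring

private lemma step2 (m : ℕ) :
    ((X:ℝ[X])^2 - 1) * derivative (((X:ℝ[X])^2-1)^(m+1)) =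
      ((2*m+2 : ℕ) : ℝ[X]) * (X * ((X:ℝ[X])^2-1)^(m+1)) := by
  rw [derivative_pow]
  simp only [derivative_sub, derivative_pow, derivative_X, derivative_one, Nat.add_sub_cancel]
  push_cast
  simp only [map_add, map_one, map_natCast, map_ofNat]
  ring

private lemma ode_eval (m k : ℕ) (x : ℝ) :
    (x^2 - 1) * (derivative^[m+k+3] (((X:ℝ[X])^2-1)^(m+1))).eval x
      + 2*((k:ℝ)+1)*x*(derivative^[m+k+2] (((X:ℝ[X])^2-1)^(m+1))).eval x
      = ((m:ℝ)+(k:ℝ)+2)*((m:ℝ)+1-(k:ℝ))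
          * (derivative^[m+k+1] (((X:ℝ[X])^2-1)^(m+1))).eval x := by
  have h := congrArg (fun q : ℝ[X] => (derivative^[m+k+2] q).eval x) (step2 m)
  rw [leib_sq (derivative (((X:ℝ[X])^2-1)^(m+1))) (m+k),
    iterate_derivative_natCast_mul] at h
  have e1 : m + k + 2 = (m+k+1) + 1 := by ring
  rw [e1, leib_X] at h
  simp only [← Function.iterate_succ_apply derivative] at h
  simp only [eval_add, eval_mul, eval_sub, eval_pow, eval_X, eval_one, eval_natCast,
    eval_ofNat, Nat.succ_eq_add_one] at h
  push_cast at h ⊢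
  have e2 : m + k + 1 + 1 + 1 = m + k + 3 := by ring
  have e3 : m + k + 1 + 1 = m + k + 2 := by ring
  rw [e2, e3] at h
  linear_combination h

private lemma hfac (l : ℕ) : ((X:ℝ[X])^2 - 1)^l = (X - C 1)^l * (X + C 1)^l := by
  rw [← mul_pow]
  congr 1
  simp [C_1]; ring

private lemma evalD1 (l : ℕ) :
    (derivative^[l] (((X:ℝ[X])^2-1)^l)).eval 1 = 2^l * (l.factorial : ℝ) := by
  rw [hfac, iterate_derivative_mul, eval_finset_sum]
  rw [Finset.sum_eq_single_of_mem 0 (Finset.mem_range.2 (Nat.succ_pos l))]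
  · rw [Nat.sub_zero, iterate_derivative_X_sub_pow_self, Function.iterate_zero_apply]
    simp [nsmul_eq_mul, eval_pow]
    ring
  · intro k hk hk0
    rw [iterate_derivative_X_sub_pow, Nat.sub_sub_self (Nat.lt_succ_iff.1 (Finset.mem_range.1 hk))]
    simp [nsmul_eq_mul, zero_pow hk0]

private lemma evalDm1 (l : ℕ) :
    (derivative^[l] (((X:ℝ[X])^2-1)^l)).eval (-1) = (-2)^l * (l.factorial : ℝ) := by
  rw [hfac, iterate_derivative_mul, eval_finset_sum]
  rw [Finset.sum_eq_single_of_mem l (Finset.mem_range.2 (Nat.lt_succ_self l))]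
  · rw [Nat.sub_self, Function.iterate_zero_apply, iterate_derivative_X_add_pow,
      Nat.sub_self, Nat.descFactorial_self]
    simp [nsmul_eq_mul, eval_pow]
    left
    norm_num
  · intro k hk hkl
    have hne : l - k ≠ 0 := by
      have := Nat.lt_succ_iff.1 (Finset.mem_range.1 hk); omega
    rw [iterate_derivative_X_add_pow]
    simp [nsmul_eq_mul, zero_pow hne]

private lemma evalD1' (m : ℕ) :
    (derivative^[m+2] (((X:ℝ[X])^2-1)^(m+1))).eval 1
      = ((m:ℝ)+1) * (((m+2).factorial : ℝ)) * 2^m := by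
  rw [hfac, iterate_derivative_mul, eval_finset_sum]
  rw [Finset.sum_eq_single_of_mem 1 (by simp)]
  · have h1 : m + 2 - 1 = m + 1 := by omega
    rw [h1, iterate_derivative_X_sub_pow_self, iterate_derivative_X_add_pow]
    have h2 : m + 1 - 1 = m := by omega
    rw [h2, Nat.descFactorial_one, Nat.choose_one_right]
    simp [nsmul_eq_mul, eval_pow]
    rw [show (m:ℕ)+1+1 = m+2 from rfl, Nat.factorial_succ (m+1)]
    push_cast
    ring
  · intro k hk hk1
    rcases Nat.eq_zero_or_pos k with h0 | h1
    · subst h0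
      rw [iterate_derivative_X_sub_pow,
        Nat.descFactorial_eq_zero_iff_lt.2 (by omega)]
      simp
    · rw [iterate_derivative_X_sub_pow]
      have hkl : k ≤ m + 2 := by
        have := Finset.mem_range.1 hk; omega
      have : m + 1 - (m + 2 - k) = k - 1 := by omega
      rw [this]
      simp [nsmul_eq_mul, zero_pow (by omega : k - 1 ≠ 0)]

/-- The Legendre polynomial of degree `l`, via the Rodrigues formula. -/
noncomputable def legendre (l : ℕ) (x : ℝ) : ℝ :=
  (1 / (2 ^ l * (Nat.factorial l : ℝ))) * iteratedDeriv l (fun t : ℝ => (t ^ 2 - 1) ^ l) x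

section Anal
variable (m : ℕ)

private noncomputable def pp (m j : ℕ) (x : ℝ) : ℝ :=
  (1 / (2 ^ (m+1) * (Nat.factorial (m+1) : ℝ))) *
    (derivative^[m+1+j] (((X:ℝ[X])^2-1)^(m+1))).eval x

private lemma legendre_eq (x : ℝ) : legendre (m+1) x = pp m 0 x := by
  unfold legendre pp
  congr 1
  have : (fun t : ℝ => (t ^ 2 - 1) ^ (m+1)) = fun t => (((X:ℝ[X])^2-1)^(m+1)).eval t := by
    funext t; simp [eval_pow]
  rw [this, iterDeriv_eval]

private lemma pp_hasDeriv (j : ℕ) (x : ℝ) : HasDerivAt (pp m j) (pp m (j+1) x) x := by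
  have h := (Polynomial.hasDerivAt (derivative^[m+1+j] (((X:ℝ[X])^2-1)^(m+1))) x).const_mul
    (1 / (2 ^ (m+1) * (Nat.factorial (m+1) : ℝ)))
  have e : derivative (derivative^[m+1+j] (((X:ℝ[X])^2-1)^(m+1)))
      = derivative^[m+1+(j+1)] (((X:ℝ[X])^2-1)^(m+1)) := by
    rw [show m+1+(j+1) = (m+1+j)+1 from rfl, Function.iterate_succ_apply']
  rw [e] at h
  exact h

private lemma pp_ode (j : ℕ) (x : ℝ) :
    (x^2 - 1) * pp m (j+2) x + 2*((j:ℝ)+1)*x* pp m (j+1) x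
      = ((m:ℝ)+(j:ℝ)+2)*((m:ℝ)+1-(j:ℝ)) * pp m j x := by
  have h := ode_eval m j x
  unfold pp
  rw [show m+1+(j+2) = m+j+3 from by ring, show m+1+(j+1) = m+j+2 from by ring,
    show m+1+j = m+j+1 from by ring]
  linear_combination (1 / (2 ^ (m+1) * (Nat.factorial (m+1) : ℝ))) * h

private lemma fact_ne : ((Nat.factorial (m+1) : ℝ)) ≠ 0 := by
  exact_mod_cast Nat.factorial_ne_zero (m+1)

private lemma pp0_one : pp m 0 1 = 1 := by
  unfold pp
  rw [show m+1+0 = m+1 from rfl, evalD1 (m+1)]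
  field_simp

private lemma pp0_negone : pp m 0 (-1) = (-1)^(m+1) := by
  unfold pp
  rw [show m+1+0 = m+1 from rfl, evalDm1 (m+1)]
  have h2 : ((-2:ℝ))^(m+1) = (-1)^(m+1) * 2^(m+1) := by
    rw [← neg_one_mul, mul_pow]
  rw [h2]
  field_simp

private lemma pp1_one : pp m 1 1 = ((m:ℝ)+1)*((m:ℝ)+2)/2 := by
  unfold pp
  rw [show m+1+1 = m+2 from rfl, evalD1' m]
  have : ((m+2).factorial : ℝ) = ((m:ℝ)+2) * ((m+1).factorial : ℝ) := by
    rw [Nat.factorial_succ]; push_cast; ring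
  rw [this]
  have h2 : (2:ℝ)^(m+1) = 2 * 2^m := by ring
  rw [h2]
  field_simp

end Anal

section Bounds
variable (m : ℕ)

private noncomputable def GG (m : ℕ) (x : ℝ) : ℝ :=
  ((m:ℝ)+1)*((m:ℝ)+2) * (pp m 0 x)^2 + (1 - x^2) * (pp m 1 x)^2

private lemma GG_hasDeriv (x : ℝ) : HasDerivAt (GG m) (2*x*(pp m 1 x)^2) x := by
  have h0 := (pp_hasDeriv m 0 x).pow 2
  have h1 := (pp_hasDeriv m 1 x).pow 2
  have hq : HasDerivAt (fun x : ℝ => 1 - x^2) (-(2*x)) x := by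
    simpa using (hasDerivAt_pow 2 x).const_sub 1
  have h := (h0.const_mul (((m:ℝ)+1)*((m:ℝ)+2))).add (hq.mul h1)
  have hode := pp_ode m 0 x
  refine h.congr_deriv ?_
  symm
  push_cast at hode ⊢
  simp only [Pi.pow_apply]
  linear_combination (2 * pp m 1 x) * hode

private lemma GG_mono : MonotoneOn (GG m) (Set.Icc 0 1) := by
  apply monotoneOn_of_deriv_nonneg (convex_Icc _ _)
  · have hd : Differentiable ℝ (GG m) := fun x => (GG_hasDeriv m x).differentiableAt
    exact hd.continuous.continuousOn
  · exact fun x _ => (GG_hasDeriv m x).differentiableAt.differentiableWithinAt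
  · intro x hx
    rw [interior_Icc] at hx
    rw [(GG_hasDeriv m x).deriv]
    nlinarith [sq_nonneg (pp m 1 x), hx.1]

private lemma GG_anti : AntitoneOn (GG m) (Set.Icc (-1) 0) := by
  apply antitoneOn_of_deriv_nonpos (convex_Icc _ _)
  · have hd : Differentiable ℝ (GG m) := fun x => (GG_hasDeriv m x).differentiableAt
    exact hd.continuous.continuousOn
  · exact fun x _ => (GG_hasDeriv m x).differentiableAt.differentiableWithinAt
  · intro x hx
    rw [interior_Icc] at hx
    rw [(GG_hasDeriv m x).deriv]
    nlinarith [sq_nonneg (pp m 1 x), hx.2]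

private lemma pp0_bound {x : ℝ} (hx : x ∈ Set.Icc (-1:ℝ) 1) : |pp m 0 x| ≤ 1 := by
  have hpos : (0:ℝ) < ((m:ℝ)+1)*((m:ℝ)+2) := by positivity
  have key : GG m x ≤ ((m:ℝ)+1)*((m:ℝ)+2) := by
    rcases le_or_gt 0 x with h | h
    · have := GG_mono m (Set.mem_Icc.2 ⟨h, hx.2⟩) (Set.mem_Icc.2 ⟨zero_le_one, le_refl 1⟩) hx.2
      calc GG m x ≤ GG m 1 := this
        _ = ((m:ℝ)+1)*((m:ℝ)+2) := by
            unfold GG; rw [pp0_one]; ring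
    · have := GG_anti m (Set.mem_Icc.2 ⟨le_refl (-1:ℝ), by linarith⟩)
        (Set.mem_Icc.2 ⟨hx.1, h.le⟩) hx.1
      calc GG m x ≤ GG m (-1) := this
        _ = ((m:ℝ)+1)*((m:ℝ)+2) := by
            unfold GG; rw [pp0_negone]
            have : ((-1:ℝ)^(m+1))^2 = 1 := by
              rw [← pow_mul, mul_comm, pow_mul]; norm_num
            rw [this]; ring
  have hsq : (pp m 0 x)^2 ≤ 1 := by
    have h1 : (1 - x^2) * (pp m 1 x)^2 ≥ 0 := by
      have : x^2 ≤ 1 := by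
        rw [sq_le_one_iff_abs_le_one, abs_le]; exact ⟨hx.1, hx.2⟩
      nlinarith [sq_nonneg (pp m 1 x)]
    have : ((m:ℝ)+1)*((m:ℝ)+2) * (pp m 0 x)^2 ≤ ((m:ℝ)+1)*((m:ℝ)+2) := by
      unfold GG at key; nlinarith
    nlinarith
  rw [← sq_le_one_iff_abs_le_one]
  exact hsq

end Bounds

section Bounds2
variable (m : ℕ)

private noncomputable def HH (m : ℕ) (x : ℝ) : ℝ :=
  (m:ℝ)*((m:ℝ)+3) * (pp m 1 x)^2 + (1 - x^2) * (pp m 2 x)^2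

private lemma HH_hasDeriv (x : ℝ) : HasDerivAt (HH m) (6*x*(pp m 2 x)^2) x := by
  have h1 := (pp_hasDeriv m 1 x).pow 2
  have h2 := (pp_hasDeriv m 2 x).pow 2
  have hq : HasDerivAt (fun x : ℝ => 1 - x^2) (-(2*x)) x := by
    simpa using (hasDerivAt_pow 2 x).const_sub 1
  have h := (h1.const_mul ((m:ℝ)*((m:ℝ)+3))).add (hq.mul h2)
  have hode := pp_ode m 1 x
  refine h.congr_deriv ?_
  symm
  push_cast at hode ⊢
  simp only [Pi.pow_apply]
  linear_combination (2 * pp m 2 x) * hode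

private lemma HH_mono : MonotoneOn (HH m) (Set.Icc 0 1) := by
  apply monotoneOn_of_deriv_nonneg (convex_Icc _ _)
  · have hd : Differentiable ℝ (HH m) := fun x => (HH_hasDeriv m x).differentiableAt
    exact hd.continuous.continuousOn
  · exact fun x _ => (HH_hasDeriv m x).differentiableAt.differentiableWithinAt
  · intro x hx
    rw [interior_Icc] at hx
    rw [(HH_hasDeriv m x).deriv]
    nlinarith [sq_nonneg (pp m 2 x), hx.1]

private lemma pp1_const : pp 0 1 x = 1 := by
  unfold pp
  have : derivative^[0+1+1] (((X:ℝ[X])^2-1)^(0+1)) = C 2 := by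
    show derivative (derivative (((X:ℝ[X])^2-1)^(0+1))) = C 2
    simp [pow_one, derivative_sub, derivative_pow, map_ofNat]
  rw [this]
  norm_num

private lemma pp1_bound {x : ℝ} (hx : x ∈ Set.Icc (0:ℝ) 1) :
    |pp m 1 x| ≤ ((m:ℝ)+1)*((m:ℝ)+2)/2 := by
  rcases Nat.eq_zero_or_pos m with h0 | h1
  · subst h0
    rw [pp1_const]
    norm_num
  · have hpos : (0:ℝ) < (m:ℝ)*((m:ℝ)+3) := by
      have : (1:ℝ) ≤ (m:ℝ) := by exact_mod_cast h1
      nlinarith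
    have key : HH m x ≤ HH m 1 :=
      HH_mono m hx (Set.mem_Icc.2 ⟨zero_le_one, le_refl 1⟩) hx.2
    have hH1 : HH m 1 = (m:ℝ)*((m:ℝ)+3) * (((m:ℝ)+1)*((m:ℝ)+2)/2)^2 := by
      unfold HH; rw [pp1_one]; ring
    rw [hH1] at key
    have hx2 : x^2 ≤ 1 := by
      rw [sq_le_one_iff_abs_le_one, abs_le]
      exact ⟨by linarith [hx.1], hx.2⟩
    have hsq : (pp m 1 x)^2 ≤ (((m:ℝ)+1)*((m:ℝ)+2)/2)^2 := by
      have hnn : (1 - x^2) * (pp m 2 x)^2 ≥ 0 := by nlinarith [sq_nonneg (pp m 2 x)]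
      have hkey2 : (m:ℝ)*((m:ℝ)+3) * (pp m 1 x)^2 ≤ (m:ℝ)*((m:ℝ)+3) * (((m:ℝ)+1)*((m:ℝ)+2)/2)^2 := by
        unfold HH at key; nlinarith
      exact (mul_le_mul_iff_right₀ hpos).1 hkey2
    nlinarith [sq_abs (pp m 1 x), abs_nonneg (pp m 1 x), sq_nonneg (((m:ℝ)+1)*((m:ℝ)+2)/2)]

private lemma pp_mvt {x : ℝ} (hx : x ∈ Set.Icc (0:ℝ) 1) :
    |1 - pp m 0 x| ≤ (((m:ℝ)+1)*((m:ℝ)+2)/2) * (1-x) := by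
  have h := (convex_Icc (0:ℝ) 1).norm_image_sub_le_of_norm_hasDerivWithin_le
    (f := pp m 0) (f' := pp m 1) (C := ((m:ℝ)+1)*((m:ℝ)+2)/2)
    (fun y _ => (pp_hasDeriv m 0 y).hasDerivWithinAt)
    (fun y hy => by rw [Real.norm_eq_abs]; exact pp1_bound m hy)
    hx (Set.mem_Icc.2 ⟨zero_le_one, le_refl 1⟩)
  rw [Real.norm_eq_abs, Real.norm_eq_abs, pp0_one, abs_of_nonneg (by linarith [hx.2] : (0:ℝ) ≤ 1 - x)] at h
  exact h

end Bounds2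

/-- For `ℓ ≥ 1`, `∫_{−1}^{1} |Q_ℓ(x)| dx ≤ (9ℓ − 3)/2` where `Q_ℓ(x) = (1 − P_ℓ(x))/(1 − x)`. -/
theorem stmt8 (l : ℕ) (hl : 1 ≤ l) :
    ∫ x in (-1 : ℝ)..1, |(1 - legendre l x) / (1 - x)| ≤ (9 * (l : ℝ) - 3) / 2 := by
  obtain ⟨m, rfl⟩ : ∃ m, l = m + 1 := ⟨l - 1, by omega⟩
  have hm1 : (0:ℝ) < (m:ℝ) + 1 := by positivity
  set c₀ : ℝ := 1 - 1/((m:ℝ)+1) with hc₀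
  have h0c : (0:ℝ) ≤ c₀ := by
    rw [hc₀]
    have : 1/((m:ℝ)+1) ≤ 1 := by
      rw [div_le_one hm1]; linarith
    linarith
  have hc1 : c₀ ≤ 1 := by
    rw [hc₀]
    have : 0 < 1/((m:ℝ)+1) := by positivity
    linarith
  have hneg : (-1:ℝ) ≤ c₀ := by linarith
  set f : ℝ → ℝ := fun x => |(1 - pp m 0 x) / (1 - x)| with hf
  have hfeq : (∫ x in (-1:ℝ)..1, |(1 - legendre (m+1) x) / (1 - x)|) = ∫ x in (-1:ℝ)..1, f x := by
    apply intervalIntegral.integral_congr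
    intro x _
    show |(1 - legendre (m+1) x) / (1 - x)| = |(1 - pp m 0 x) / (1 - x)|
    rw [legendre_eq]
  rw [hfeq]
  have hd0 : Differentiable ℝ (pp m 0) := fun x => (pp_hasDeriv m 0 x).differentiableAt
  have hcont : Continuous (pp m 0) := hd0.continuous
  -- pointwise bounds
  have hb1 : ∀ x ∈ Set.Icc (-1:ℝ) c₀, f x ≤ 2*((m:ℝ)+1) := by
    intro x hx
    have hxle : x ≤ c₀ := hx.2
    have hden : 1/((m:ℝ)+1) ≤ 1 - x := by
      rw [hc₀] at hxle; linarith
    have hdpos : (0:ℝ) < 1 - x := lt_of_lt_of_le (by positivity) hden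
    have hppb : |pp m 0 x| ≤ 1 := pp0_bound m (Set.mem_Icc.2 ⟨hx.1, by linarith⟩)
    have hnum : |1 - pp m 0 x| ≤ 2 := by
      rw [abs_le] at hppb ⊢
      constructor <;> linarith [hppb.1, hppb.2]
    rw [hf]
    simp only [abs_div, abs_of_pos hdpos]
    rw [div_le_iff₀ hdpos]
    have h1 : (1:ℝ) ≤ (1-x) * ((m:ℝ)+1) := (div_le_iff₀ hm1).1 hden
    nlinarith
  have hb2 : ∀ x ∈ Set.Icc c₀ 1, f x ≤ ((m:ℝ)+1)*((m:ℝ)+2)/2 := by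
    intro x hx
    rcases eq_or_lt_of_le hx.2 with heq | hlt
    · rw [hf]
      simp only [heq]
      rw [pp0_one]
      simp
      positivity
    · have hdpos : (0:ℝ) < 1 - x := by linarith
      have hmvt := pp_mvt m (Set.mem_Icc.2 ⟨le_trans h0c hx.1, hx.2⟩)
      rw [hf]
      simp only [abs_div, abs_of_pos hdpos]
      rw [div_le_iff₀ hdpos]
      exact hmvt
  -- integrability
  have hi1 : IntervalIntegrable f MeasureTheory.volume (-1) c₀ := by
    apply ContinuousOn.intervalIntegrable
    apply ContinuousOn.abs
    apply ContinuousOn.div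
    · exact (continuous_const.sub hcont).continuousOn
    · exact (continuous_const.sub continuous_id).continuousOn
    · intro x hx
      rw [Set.uIcc_of_le hneg] at hx
      have : 1/((m:ℝ)+1) ≤ 1 - x := by
        have := hx.2; rw [hc₀] at this; linarith
      have : (0:ℝ) < 1 - x := lt_of_lt_of_le (by positivity) this
      exact ne_of_gt this
  have hmeas : Measurable f := by
    rw [hf]
    exact ((measurable_const.sub hcont.measurable).div
      (measurable_const.sub measurable_id)).abs
  have hi2 : IntervalIntegrable f MeasureTheory.volume c₀ 1 := by
    rw [intervalIntegrable_iff]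
    have hci : MeasureTheory.IntegrableOn (fun _ : ℝ => ((m:ℝ)+1)*((m:ℝ)+2)/2)
        (Set.uIoc c₀ 1) MeasureTheory.volume := by
      rw [← intervalIntegrable_iff]
      exact intervalIntegrable_const
    apply MeasureTheory.Integrable.mono' hci hmeas.aestronglyMeasurable
    apply MeasureTheory.ae_restrict_of_forall_mem measurableSet_uIoc
    intro x hx
    rw [Set.uIoc_of_le hc1] at hx
    rw [Real.norm_eq_abs, hf]
    simp only [abs_abs]
    exact hb2 x (Set.mem_Icc.2 ⟨le_of_lt hx.1, hx.2⟩)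
  rw [← intervalIntegral.integral_add_adjacent_intervals hi1 hi2]
  have hI1 : (∫ x in (-1:ℝ)..c₀, f x) ≤ (c₀ - (-1)) * (2*((m:ℝ)+1)) := by
    have := intervalIntegral.integral_mono_on hneg hi1
      (intervalIntegrable_const (c := 2*((m:ℝ)+1))) hb1
    rwa [intervalIntegral.integral_const, smul_eq_mul] at this
  have hI2 : (∫ x in c₀..(1:ℝ), f x) ≤ (1 - c₀) * (((m:ℝ)+1)*((m:ℝ)+2)/2) := by
    have := intervalIntegral.integral_mono_on hc1 hi2
      (intervalIntegrable_const (c := ((m:ℝ)+1)*((m:ℝ)+2)/2)) hb2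
    rwa [intervalIntegral.integral_const, smul_eq_mul] at this
  have hfin : (c₀ - (-1)) * (2*((m:ℝ)+1)) + (1 - c₀) * (((m:ℝ)+1)*((m:ℝ)+2)/2)
      = (9 * ((m:ℝ)+1) - 3) / 2 := by
    rw [hc₀]
    field_simp
    ring
  push_cast
  calc (∫ x in (-1:ℝ)..c₀, f x) + ∫ x in c₀..(1:ℝ), f x
      ≤ (c₀ - (-1)) * (2*((m:ℝ)+1)) + (1 - c₀) * (((m:ℝ)+1)*((m:ℝ)+2)/2) :=
        add_le_add hI1 hI2
    _ = (9 * ((m:ℝ)+1) - 3) / 2 := hfin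
end

section
/- Fix θ ∈ [0,π) and c > 0, and set θ_a := 2 arctan(a tan(θ/2)). Then lim_{ℓ→∞} P_ℓ(cos θ_{c/ℓ}) = J₀(2c tan(θ/2)), where P_ℓ is the Legendre polynomial of degree ℓ and J₀ the Bessel function of order 0. -/
open Real Set Filter

/-- The Bessel function of order zero, `J₀(x) = ∑_{k≥0} (−1)^k/(k!)² (x/2)^{2k}`. -/
noncomputable def besselJ0 (x : ℝ) : ℝ :=
  ∑' k : ℕ, (-1 : ℝ) ^ k / ((Nat.factorial k : ℝ) ^ 2) * (x / 2) ^ (2 * k)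

open Polynomial in
lemma iteratedDeriv_polyeval (p : Polynomial ℝ) (n : ℕ) :
    iteratedDeriv n (fun t => p.eval t) = fun x => (derivative^[n] p).eval x := by
  induction n with
  | zero => simp
  | succ n ih =>
    rw [iteratedDeriv_succ, ih, Function.iterate_succ_apply']
    funext x
    exact Polynomial.deriv _

open Polynomial Finset in
lemma legendre_eq_sum (l : ℕ) (x : ℝ) :
    legendre l x = ∑ k ∈ range (l + 1),
      (l.choose k : ℝ) ^ 2 * ((x - 1) / 2) ^ k * ((x + 1) / 2) ^ (l - k) := by
  have hp : (fun t : ℝ => (t ^ 2 - 1) ^ l) =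
      fun t => Polynomial.eval t (((X - C 1) ^ l * (X - C (-1)) ^ l : ℝ[X])) := by
    funext t; simp [← mul_pow]; ring_nf
  rw [legendre, hp, iteratedDeriv_polyeval, iterate_derivative_mul]
  simp only []
  rw [Polynomial.eval_finset_sum, Finset.mul_sum, Nat.succ_eq_add_one]
  refine Finset.sum_congr rfl fun k hk => ?_
  have hk' : k ≤ l := Nat.lt_succ_iff.mp (Finset.mem_range.mp hk)
  rw [iterate_derivative_X_sub_pow, iterate_derivative_X_sub_pow]
  simp only [eval_smul, eval_mul, eval_smul, eval_pow, eval_sub, eval_X, eval_C, smul_eq_mul,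
    nsmul_eq_mul, eval_natCast, Nat.sub_sub_self hk']
  have h1 : (l.descFactorial (l - k) : ℝ) = l.factorial / k.factorial := by
    rw [Nat.descFactorial_eq_div (Nat.sub_le l k), Nat.sub_sub_self hk',
      Nat.cast_div (Nat.factorial_dvd_factorial hk') (by positivity)]
  have h2 : (l.descFactorial k : ℝ) = l.factorial / (l - k).factorial := by
    rw [Nat.descFactorial_eq_div hk',
      Nat.cast_div (Nat.factorial_dvd_factorial (Nat.sub_le l k)) (by positivity)]
  have h3 : (l.choose k : ℝ) = l.factorial / (k.factorial * (l - k).factorial) := by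
    rw [Nat.choose_eq_factorial_div_factorial hk',
      Nat.cast_div (Nat.factorial_mul_factorial_dvd_factorial hk') (by positivity), Nat.cast_mul]
  have hx : x - -1 = x + 1 := by ring
  rw [hx, h1, h2, h3]
  have hkf : (k.factorial : ℝ) ≠ 0 := by positivity
  have hlkf : ((l - k).factorial : ℝ) ≠ 0 := by positivity
  have hlf : (l.factorial : ℝ) ≠ 0 := by positivity
  have h2l : (2 : ℝ) ^ l = 2 ^ (l - k) * 2 ^ k := by
    rw [← pow_add]; congr 1; omega
  rw [div_pow, div_pow, h2l]
  simp only [div_pow]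
  field_simp

open Finset in
lemma legendre_cos_two_arctan (l : ℕ) (w : ℝ) :
    legendre l (Real.cos (2 * Real.arctan w)) = ∑ k ∈ range (l + 1),
      (l.choose k : ℝ) ^ 2 * (-(w ^ 2 / (1 + w ^ 2))) ^ k * (1 / (1 + w ^ 2)) ^ (l - k) := by
  have h : (0:ℝ) < 1 + w ^ 2 := by positivity
  have e1 : (Real.cos (2 * Real.arctan w) - 1) / 2 = -(w ^ 2 / (1 + w ^ 2)) := by
    rw [Real.cos_two_mul, Real.cos_arctan, div_pow, one_pow, Real.sq_sqrt h.le]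
    field_simp; ring
  have e2 : (Real.cos (2 * Real.arctan w) + 1) / 2 = 1 / (1 + w ^ 2) := by
    rw [Real.cos_two_mul, Real.cos_arctan, div_pow, one_pow, Real.sq_sqrt h.le]
    field_simp; ring
  rw [legendre_eq_sum, ← e1, ← e2]

/-- The general term in the expansion of `P_l(cos(2 arctan(s/l)))`. -/
noncomputable def Faux (s : ℝ) (l k : ℕ) : ℝ :=
  (l.choose k : ℝ) ^ 2 * (-((s / l) ^ 2 / (1 + (s / l) ^ 2))) ^ k
    * (1 / (1 + (s / l) ^ 2)) ^ (l - k)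

lemma tendsto_choose_div_pow (k : ℕ) :
    Tendsto (fun l : ℕ => (l.choose k : ℝ) / (l : ℝ) ^ k) atTop
      (nhds (1 / (Nat.factorial k : ℝ))) := by
  have hprod : Tendsto (fun l : ℕ => ∏ i ∈ Finset.range k, (1 - (i : ℝ) / l)) atTop
      (nhds (∏ i ∈ Finset.range k, (1:ℝ))) := by
    apply tendsto_finset_prod
    intro i _
    simpa using tendsto_const_nhds.sub (tendsto_const_div_atTop_nhds_zero_nat (i : ℝ))
  rw [Finset.prod_const_one] at hprod
  have heq : ∀ᶠ l : ℕ in atTop,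
      (∏ i ∈ Finset.range k, (1 - (i : ℝ) / l)) / (Nat.factorial k : ℝ)
        = (l.choose k : ℝ) / (l : ℝ) ^ k := by
    filter_upwards [eventually_ge_atTop (max 1 k)] with l hl
    have hl1 : 1 ≤ l := le_trans (le_max_left 1 k) hl
    have hlk : k ≤ l := le_trans (le_max_right 1 k) hl
    have hlne : (l : ℝ) ≠ 0 := Nat.cast_ne_zero.mpr (by omega)
    have hch : (l.choose k : ℝ) * (k.factorial : ℝ) = ∏ i ∈ Finset.range k, ((l:ℝ) - i) := by
      rw [← Nat.cast_mul, mul_comm, ← Nat.descFactorial_eq_factorial_mul_choose,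
        Nat.descFactorial_eq_prod_range, Nat.cast_prod]
      exact Finset.prod_congr rfl fun i hi => by
        have : i ≤ l := le_trans (le_of_lt (Finset.mem_range.mp hi)) hlk
        push_cast [this]; ring
    have hpow : ∏ i ∈ Finset.range k, (1 - (i:ℝ)/l)
        = (∏ i ∈ Finset.range k, ((l:ℝ) - i)) / (l:ℝ) ^ k := by
      rw [Finset.prod_congr rfl (fun i _ => by field_simp :
          ∀ i ∈ Finset.range k, (1 - (i:ℝ)/l) = ((l:ℝ) - i) / l),
        Finset.prod_div_distrib, Finset.prod_const, Finset.card_range]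
    have hfac : (Nat.factorial k : ℝ) ≠ 0 := by positivity
    rw [hpow, ← hch]
    field_simp
  exact Tendsto.congr' heq (hprod.div_const (Nat.factorial k : ℝ))

lemma tendsto_D (s : ℝ) (k : ℕ) :
    Tendsto (fun l : ℕ => (1 / (1 + (s / l) ^ 2)) ^ (l - k)) atTop (nhds 1) := by
  have hub : ∀ᶠ l : ℕ in atTop, (1 / (1 + (s / l) ^ 2)) ^ (l - k) ≤ 1 := by
    filter_upwards with l
    apply pow_le_one₀ (by positivity)
    rw [div_le_one (by positivity)]
    nlinarith [sq_nonneg (s / l)]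
  have hlb : ∀ᶠ l : ℕ in atTop,
      Real.exp (-(s ^ 2 / l)) ≤ (1 / (1 + (s / l) ^ 2)) ^ (l - k) := by
    filter_upwards [eventually_ge_atTop 1] with l hl
    have hlpos : (0:ℝ) < l := by exact_mod_cast hl
    have h1 : (1 + (s / l) ^ 2) ^ (l - k) ≤ Real.exp (s ^ 2 / l) := by
      calc (1 + (s / l) ^ 2) ^ (l - k) ≤ (1 + (s / l) ^ 2) ^ l :=
            pow_le_pow_right₀ (by nlinarith [sq_nonneg (s / (l:ℝ))]) (Nat.sub_le l k)
        _ ≤ (Real.exp ((s / l) ^ 2)) ^ l :=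
            pow_le_pow_left₀ (by positivity)
              (by linarith [Real.add_one_le_exp ((s / (l:ℝ)) ^ 2)]) l
        _ = Real.exp (l * (s / l) ^ 2) := by rw [← Real.exp_nat_mul]
        _ = Real.exp (s ^ 2 / l) := by
            congr 1
            field_simp
    rw [Real.exp_neg, one_div, inv_pow]
    exact inv_anti₀ (by positivity) h1
  have hexp : Tendsto (fun l : ℕ => Real.exp (-(s ^ 2 / l))) atTop (nhds 1) := by
    have h0 : Tendsto (fun l : ℕ => -(s ^ 2 / (l:ℝ))) atTop (nhds 0) := by
      simpa using (tendsto_const_div_atTop_nhds_zero_nat (s ^ 2)).neg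
    have := (Real.continuous_exp.tendsto 0).comp h0
    rw [Real.exp_zero] at this
    exact this
  exact tendsto_of_tendsto_of_tendsto_of_le_of_le' hexp tendsto_const_nhds hlb hub

lemma Faux_bound (s : ℝ) (l k : ℕ) (hl : 1 ≤ l) :
    ‖Faux s l k‖ ≤ s ^ (2 * k) / (Nat.factorial k : ℝ) ^ 2 := by
  have hlpos : (0:ℝ) < l := by exact_mod_cast hl
  have hden : (0:ℝ) < 1 + (s / l) ^ 2 := by positivity
  have hfac : (0:ℝ) < (Nat.factorial k : ℝ) := by positivity
  have hch : (l.choose k : ℝ) * (k.factorial : ℝ) ≤ (l:ℝ) ^ k := by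
    calc (l.choose k : ℝ) * (k.factorial : ℝ) = ((k.factorial * l.choose k : ℕ) : ℝ) := by
          push_cast; ring
      _ = ((l.descFactorial k : ℕ) : ℝ) := by rw [Nat.descFactorial_eq_factorial_mul_choose]
      _ ≤ ((l ^ k : ℕ) : ℝ) := by exact_mod_cast Nat.descFactorial_le_pow l k
      _ = (l:ℝ) ^ k := by push_cast; ring
  have hchle : (l.choose k : ℝ) ≤ (l:ℝ) ^ k / k.factorial := by
    rw [le_div_iff₀ hfac]; exact hch
  have habs : ‖Faux s l k‖ = (l.choose k : ℝ) ^ 2 * ((s / l) ^ 2 / (1 + (s / l) ^ 2)) ^ k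
      * (1 / (1 + (s / l) ^ 2)) ^ (l - k) := by
    simp only [Faux, norm_mul, norm_pow, Real.norm_eq_abs, abs_neg]
    rw [abs_of_nonneg (by positivity : (0:ℝ) ≤ (s / l) ^ 2 / (1 + (s / l) ^ 2)),
      abs_of_nonneg (by positivity : (0:ℝ) ≤ 1 / (1 + (s / l) ^ 2)),
      abs_of_nonneg (by positivity : (0:ℝ) ≤ (l.choose k : ℝ))]
  rw [habs]
  have h1 : (1 / (1 + (s / l) ^ 2)) ^ (l - k) ≤ 1 := by
    apply pow_le_one₀ (by positivity)
    rw [div_le_one hden]; nlinarith [sq_nonneg (s / (l:ℝ))]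
  have h2 : ((s / l) ^ 2 / (1 + (s / l) ^ 2)) ^ k ≤ ((s / l) ^ 2) ^ k := by
    apply pow_le_pow_left₀ (by positivity)
    calc (s / l) ^ 2 / (1 + (s / l) ^ 2) ≤ (s / l) ^ 2 / 1 :=
          div_le_div_of_nonneg_left (by positivity) one_pos
            (by nlinarith [sq_nonneg (s / (l:ℝ))])
      _ = (s / l) ^ 2 := by ring
  calc (l.choose k : ℝ) ^ 2 * ((s / l) ^ 2 / (1 + (s / l) ^ 2)) ^ k
        * (1 / (1 + (s / l) ^ 2)) ^ (l - k)
      ≤ ((l:ℝ) ^ k / k.factorial) ^ 2 * ((s / l) ^ 2) ^ k * 1 := by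
        apply mul_le_mul (mul_le_mul (pow_le_pow_left₀ (by positivity) hchle 2) h2
          (by positivity) (by positivity)) h1 (by positivity) (by positivity)
    _ = s ^ (2 * k) / (Nat.factorial k : ℝ) ^ 2 := by
        rw [pow_mul, mul_one, div_pow, div_pow, div_pow]
        rw [← pow_mul, ← pow_mul, mul_comm k 2]
        field_simp
        ring

lemma Faux_tendsto (s : ℝ) (k : ℕ) :
    Tendsto (fun l : ℕ => Faux s l k) atTop
      (nhds ((-1 : ℝ) ^ k / ((Nat.factorial k : ℝ) ^ 2) * s ^ (2 * k))) := by
  have hw1 : Tendsto (fun l : ℕ => 1 + (s / (l:ℝ)) ^ 2) atTop (nhds 1) := by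
    have h0 := (tendsto_const_div_atTop_nhds_zero_nat s).pow 2
    simpa using tendsto_const_nhds.add h0
  have hB : Tendsto (fun l : ℕ => s ^ 2 / (1 + (s / (l:ℝ)) ^ 2)) atTop (nhds (s ^ 2)) := by
    simpa [Pi.div_def] using (tendsto_const_nhds (x := s ^ 2) (f := atTop (α := ℕ))).div hw1 one_ne_zero
  have hcomb : Tendsto (fun l : ℕ =>
      (-1:ℝ) ^ k * ((l.choose k : ℝ) / (l:ℝ) ^ k) ^ 2 * (s ^ 2 / (1 + (s / (l:ℝ)) ^ 2)) ^ k
        * (1 / (1 + (s / (l:ℝ)) ^ 2)) ^ (l - k)) atTop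
      (nhds ((-1:ℝ) ^ k * (1 / (Nat.factorial k : ℝ)) ^ 2 * (s ^ 2) ^ k * 1)) :=
    ((tendsto_const_nhds.mul ((tendsto_choose_div_pow k).pow 2)).mul (hB.pow k)).mul
      (tendsto_D s k)
  have heq : ∀ᶠ l : ℕ in atTop,
      (-1:ℝ) ^ k * ((l.choose k : ℝ) / (l:ℝ) ^ k) ^ 2 * (s ^ 2 / (1 + (s / (l:ℝ)) ^ 2)) ^ k
        * (1 / (1 + (s / (l:ℝ)) ^ 2)) ^ (l - k) = Faux s l k := by
    filter_upwards [eventually_ge_atTop 1] with l hl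
    have hlne : (l:ℝ) ≠ 0 := Nat.cast_ne_zero.mpr (by omega)
    have hden : (1 + (s / (l:ℝ)) ^ 2) ≠ 0 := by positivity
    unfold Faux
    rw [show (-((s / (l:ℝ)) ^ 2 / (1 + (s / (l:ℝ)) ^ 2))) ^ k
        = (-1:ℝ) ^ k * ((s / (l:ℝ)) ^ 2 / (1 + (s / (l:ℝ)) ^ 2)) ^ k from neg_pow _ k]
    rw [show ((s / (l:ℝ)) ^ 2 / (1 + (s / (l:ℝ)) ^ 2)) ^ k
        = ((s / (l:ℝ)) ^ 2) ^ k / ((1 + (s / (l:ℝ)) ^ 2)) ^ k from div_pow _ _ k]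
    rw [show (s ^ 2 / (1 + (s / (l:ℝ)) ^ 2)) ^ k
        = (s ^ 2) ^ k / ((1 + (s / (l:ℝ)) ^ 2)) ^ k from div_pow _ _ k]
    rw [show ((l.choose k : ℝ) / (l:ℝ) ^ k) ^ 2 = (l.choose k : ℝ) ^ 2 / ((l:ℝ) ^ k) ^ 2
        from div_pow _ _ 2]
    have hsl : ((s / (l:ℝ)) ^ 2) ^ k = (s ^ 2) ^ k / ((l:ℝ) ^ k) ^ 2 := by
      rw [div_pow, div_pow, ← pow_mul, ← pow_mul, ← pow_mul, mul_comm k 2]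
    rw [hsl]
    have hlk : ((l:ℝ) ^ k) ^ 2 ≠ 0 := by positivity
    have hdk : ((1 + (s / (l:ℝ)) ^ 2)) ^ k ≠ 0 := by positivity
    field_simp
  have hval : ((-1:ℝ) ^ k * (1 / (Nat.factorial k : ℝ)) ^ 2 * (s ^ 2) ^ k * 1)
      = (-1 : ℝ) ^ k / ((Nat.factorial k : ℝ) ^ 2) * s ^ (2 * k) := by
    rw [pow_mul, mul_one, div_pow, one_pow]
    ring
  rw [← hval]
  exact Tendsto.congr' heq hcomb

lemma summable_bound (s : ℝ) :
    Summable (fun k : ℕ => s ^ (2 * k) / (Nat.factorial k : ℝ) ^ 2) := by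
  have hle : ∀ k : ℕ, s ^ (2 * k) / (Nat.factorial k : ℝ) ^ 2
      ≤ (s ^ 2) ^ k / (Nat.factorial k : ℝ) := by
    intro k
    rw [pow_mul]
    have h1 : (1:ℝ) ≤ (Nat.factorial k : ℝ) := by exact_mod_cast k.factorial_pos
    apply div_le_div_of_nonneg_left (by positivity) (by positivity)
    nlinarith
  exact Summable.of_nonneg_of_le (fun k => by rw [pow_mul]; positivity) hle
    (Real.summable_pow_div_factorial (s ^ 2))

/-- For fixed `θ ∈ [0,π)` and `c > 0`, with `θ_a = 2 arctan(a tan(θ/2))`: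
`lim_{ℓ→∞} P_ℓ(cos θ_{c/ℓ}) = J₀(2c tan(θ/2))`. -/
theorem stmt17 (θ c : ℝ) (hθ : θ ∈ Set.Ico 0 Real.pi) (hc : 0 < c) :
    Filter.Tendsto
      (fun l : ℕ => legendre l (Real.cos (2 * Real.arctan ((c / l) * Real.tan (θ / 2)))))
      Filter.atTop (nhds (besselJ0 (2 * c * Real.tan (θ / 2)))) := by
  set s : ℝ := c * Real.tan (θ / 2) with hs
  have key : ∀ l : ℕ, legendre l (Real.cos (2 * Real.arctan ((c / l) * Real.tan (θ / 2))))
      = ∑' k : ℕ, Faux s l k := by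
    intro l
    have hw : (c / l) * Real.tan (θ / 2) = s / l := by rw [hs]; ring
    rw [hw, legendre_cos_two_arctan]
    exact (tsum_eq_sum (fun k hk => by
      have hkl : l < k := by simpa using Finset.mem_range.not.mp hk
      simp [Faux, Nat.choose_eq_zero_of_lt hkl])).symm
  have hJ : besselJ0 (2 * c * Real.tan (θ / 2))
      = ∑' k : ℕ, (-1 : ℝ) ^ k / ((Nat.factorial k : ℝ) ^ 2) * s ^ (2 * k) := by
    unfold besselJ0
    refine tsum_congr fun k => ?_
    rw [show 2 * c * Real.tan (θ / 2) / 2 = s by rw [hs]; ring]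
  simp only [key]
  rw [hJ]
  apply tendsto_tsum_of_dominated_convergence (summable_bound s) (fun k => Faux_tendsto s k)
  filter_upwards [eventually_ge_atTop 1] with l hl
  exact fun k => Faux_bound s l k hl
end
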